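/- arXiv:2604.10376 — 2 statements merged into one kernel-verified Lean document; each statement's English description precedes it below -/
import Mathlib

section
/- Let ν be an entrywise nonnegative D×D real matrix with spectral radius ρ(ν) < 1, and let Λ and E be diagonal matrices with positive diagonal entries satisfying Λ_{ii}/E_{ii} ≤ 1 for every i. If (I − ν)^{-1} Λ [(I − ν)^{-1}]ᵀ = E, then ν is diagonal, and in fact ν = I − Λ^{1/2} E^{-1/2}. -/
/-! Since `ρ(ν) < 1`, `νⁿ → 0` by Gelfand's formula, so `A = (1 - ν)⁻¹` is the limit of the
partial sums of `∑ νⁿ` and is entrywise nonnegative; `A = 1 + ν A` then gives `A i i ≥ 1`.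
For `i ≠ j` the entry `(A Λ Aᵀ) i j = ∑ₖ A i k λₖ A j k` vanishes and contains the term
`A i i λᵢ A j i`, so `A` is diagonal. Hence `1 - ν = A⁻¹` is diagonal and `E = A² Λ`
determines `A i i = √(e i / l i)`. -/

open Matrix Filter Topology

theorem tendsto_pow_atTop_nhds_zero_of_forall_spectrum_norm_lt_one {A : Type*} [NormedRing A]
    [NormedAlgebra ℂ A] [CompleteSpace A] {a : A} (h : ∀ μ ∈ spectrum ℂ a, ‖μ‖ < 1) :
    Tendsto (a ^ ·) atTop (𝓝 0) := by
  have hρ : spectralRadius ℂ a < 1 := by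
    rcases (spectrum ℂ a).eq_empty_or_nonempty with hempty | hne
    · simp [spectralRadius, hempty]
    · simpa using spectrum.spectralRadius_lt_of_forall_lt_of_nonempty hne (r := 1)
        fun μ hμ => by simpa [← NNReal.coe_lt_coe] using h μ hμ
  obtain ⟨r, hρr, hr1⟩ := ENNReal.lt_iff_exists_nnreal_btwn.mp hρ
  have hbound : ∀ᶠ n : ℕ in atTop, ‖a ^ n‖ ≤ (r : ℝ) ^ n := by
    filter_upwards [(spectrum.gelfand_formula a).eventually_lt_const hρr,
      eventually_ge_atTop 1] with n hn hn1
    have := ENNReal.rpow_le_rpow hn.le (Nat.cast_nonneg n)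
    rw [← ENNReal.rpow_mul, one_div, inv_mul_cancel₀ (by positivity), ENNReal.rpow_one,
      ENNReal.rpow_natCast, ← ENNReal.coe_pow, ENNReal.coe_le_coe] at this
    exact_mod_cast this
  exact squeeze_zero_norm' hbound
    (tendsto_pow_atTop_nhds_zero_of_lt_one r.coe_nonneg (by exact_mod_cast hr1))

theorem tendsto_sum_range_pow_of_tendsto_pow {R : Type*} [Ring R] [TopologicalSpace R]
    [IsTopologicalRing R] {x a : R} (hx : Tendsto (x ^ ·) atTop (𝓝 0)) (ha : (1 - x) * a = 1) :
    Tendsto (fun N => ∑ n ∈ Finset.range N, x ^ n) atTop (𝓝 a) := by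
  have hsum : ∀ N, ∑ n ∈ Finset.range N, x ^ n = a - x ^ N * a := fun N => by
    calc ∑ n ∈ Finset.range N, x ^ n = (∑ n ∈ Finset.range N, x ^ n) * (1 - x) * a := by
          rw [mul_assoc, ha, mul_one]
      _ = a - x ^ N * a := by rw [← neg_sub x, mul_neg, geom_sum_mul, neg_sub, sub_mul, one_mul]
  simpa [hsum] using tendsto_const_nhds.sub (hx.mul_const a)

namespace Matrix

variable {n : Type*} [Fintype n] [DecidableEq n]

theorem map_mem_spectrum_map_iff {K L : Type*} [Field K] [Field L] (f : K →+* L)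
    (M : Matrix n n K) (r : K) : f r ∈ spectrum L (M.map f) ↔ r ∈ spectrum K M := by
  simp [mem_spectrum_iff_isRoot_charpoly, charpoly_map, Polynomial.eval_map_apply]

theorem tendsto_pow_of_forall_spectrum_map_ofReal_norm_lt_one {ν : Matrix n n ℝ}
    (h : ∀ μ ∈ spectrum ℂ (ν.map Complex.ofReal), ‖μ‖ < 1) :
    Tendsto (ν ^ ·) atTop (𝓝 0) := by
  -- any submultiplicative norm will do; the `L∞` operator norm induces the entrywise topology
  let _ : NormedRing (Matrix n n ℂ) := Matrix.linftyOpNormedRing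
  let _ : NormedAlgebra ℂ (Matrix n n ℂ) := Matrix.linftyOpNormedAlgebra
  have hC := tendsto_pow_atTop_nhds_zero_of_forall_spectrum_norm_lt_one h
  have hre : ∀ k : ℕ, ν ^ k = ((ν.map Complex.ofReal) ^ k).map Complex.re := fun k => by
    have : (ν.map Complex.ofReal) ^ k = (ν ^ k).map Complex.ofReal :=
      (map_pow Complex.ofRealHom.mapMatrix ν k).symm
    simp [this, map_map, Function.comp_def]
  simpa [hre, Function.comp_def] using
    ((continuous_id.matrix_map Complex.continuous_re).tendsto 0).comp hC

theorem isUnit_one_sub_of_forall_spectrum_map_ofReal_norm_lt_one {ν : Matrix n n ℝ}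
    (h : ∀ μ ∈ spectrum ℂ (ν.map Complex.ofReal), ‖μ‖ < 1) : IsUnit (1 - ν) := by
  have h1 : (1 : ℝ) ∉ spectrum ℝ ν := fun hmem => by
    simpa using h _ ((map_mem_spectrum_map_iff Complex.ofRealHom ν 1).mpr hmem)
  simpa using spectrum.notMem_iff.mp h1

section Order

variable {R : Type*} [Ring R] [PartialOrder R] [IsOrderedRing R] {ν A : Matrix n n R}

theorem apply_nonneg_of_one_sub_mul_eq_one [TopologicalSpace R] [IsTopologicalRing R]
    [OrderClosedTopology R] (hν : ∀ i j, 0 ≤ ν i j)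
    (hpow : Tendsto (ν ^ ·) atTop (𝓝 0)) (hA : (1 - ν) * A = 1) (i j : n) : 0 ≤ A i j :=
  ge_of_tendsto (((continuous_id.matrix_elem i j).tendsto A).comp
      (tendsto_sum_range_pow_of_tendsto_pow hpow hA))
    (Eventually.of_forall fun N => by
      simpa [Matrix.sum_apply] using Finset.sum_nonneg fun k _ => pow_apply_nonneg hν k i j)

theorem one_le_apply_self_of_one_sub_mul_eq_one (hν : ∀ i j, 0 ≤ ν i j)
    (hA₀ : ∀ i j, 0 ≤ A i j) (hA : (1 - ν) * A = 1) (i : n) : 1 ≤ A i i := by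
  have hA' : A = 1 + ν * A := by rw [sub_mul, one_mul, sub_eq_iff_eq_add] at hA; exact hA
  rw [hA', add_apply, one_apply_eq, le_add_iff_nonneg_right]
  exact Finset.sum_nonneg fun k _ => mul_nonneg (hν i k) (hA₀ k i)

end Order

theorem eq_diagonal_of_mul_diagonal_mul_transpose_eq_diagonal {R : Type*} [Ring R]
    [LinearOrder R] [IsStrictOrderedRing R] {A : Matrix n n R} {l e : n → R}
    (hA₀ : ∀ i j, 0 ≤ A i j) (hAii : ∀ i, 0 < A i i) (hl : ∀ i, 0 < l i)
    (h : A * diagonal l * Aᵀ = diagonal e) : A = diagonal (fun i => A i i) := by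
  have hoff : ∀ i j, i ≠ j → A j i = 0 := fun i j hij => by
    have hsum : ∑ k, A i k * l k * A j k = 0 := by
      have hij' := congrFun₂ h i j
      rw [mul_apply, diagonal_apply_ne _ hij] at hij'
      simpa only [mul_diagonal, transpose_apply] using hij'
    have hterm := (Finset.sum_eq_zero_iff_of_nonneg fun k _ =>
      mul_nonneg (mul_nonneg (hA₀ i k) (hl k).le) (hA₀ j k)).mp hsum i (Finset.mem_univ i)
    exact (mul_eq_zero.mp hterm).resolve_left (mul_pos (hAii i) (hl i)).ne'
  ext i j
  by_cases hij : i = j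
  · simp [hij]
  · simp [hij, hoff j i (Ne.symm hij)]

end Matrix

theorem stmt_3_general (D : ℕ) (ν : Matrix (Fin D) (Fin D) ℝ)
    (hnn : ∀ i j, 0 ≤ ν i j)
    (hspec : ∀ μ ∈ spectrum ℂ (ν.map (Complex.ofReal)), ‖μ‖ < 1)
    (l e : Fin D → ℝ) (hl : ∀ i, 0 < l i)
    (heq : (1 - ν)⁻¹ * Matrix.diagonal l * ((1 - ν)⁻¹)ᵀ = Matrix.diagonal e) :
    (∀ i j, i ≠ j → ν i j = 0) ∧
      ν = 1 - Matrix.diagonal (fun i => Real.sqrt (l i) / Real.sqrt (e i)) := by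
  set A := (1 - ν)⁻¹
  have hA : (1 - ν) * A = 1 := mul_nonsing_inv _
    ((isUnit_iff_isUnit_det _).mp (isUnit_one_sub_of_forall_spectrum_map_ofReal_norm_lt_one hspec))
  have hA₀ := apply_nonneg_of_one_sub_mul_eq_one hnn
    (tendsto_pow_of_forall_spectrum_map_ofReal_norm_lt_one hspec) hA
  set a := fun i => A i i
  have ha : ∀ i, 0 < a i := fun i =>
    one_pos.trans_le (one_le_apply_self_of_one_sub_mul_eq_one hnn hA₀ hA i)
  have hAa : A = diagonal a := eq_diagonal_of_mul_diagonal_mul_transpose_eq_diagonal hA₀ ha hl heq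
  have he : ∀ i, e i = a i ^ 2 * l i := fun i => by
    rw [hAa, diagonal_transpose, diagonal_mul_diagonal, diagonal_mul_diagonal] at heq
    rw [← congrFun (diagonal_injective heq) i]
    ring
  have hν : ν = 1 - diagonal a⁻¹ := by
    have h1 : diagonal a⁻¹ * A = 1 := by
      rw [hAa, diagonal_mul_diagonal, ← diagonal_one]
      exact congrArg diagonal (funext fun i => inv_mul_cancel₀ (ha i).ne')
    rw [← inv_eq_left_inv h1, inv_eq_left_inv hA, sub_sub_cancel]
  have hsqrt : (fun i => √(l i) / √(e i)) = a⁻¹ := funext fun i => by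
    have : √(l i) ≠ 0 := (Real.sqrt_pos.mpr (hl i)).ne'
    rw [he, Real.sqrt_mul (sq_nonneg _), Real.sqrt_sq (ha i).le, Pi.inv_apply]
    field_simp
  rw [hsqrt]
  exact ⟨fun i j hij => by simp [hν, hij], hν⟩

/-- Let `ν` be an entrywise nonnegative `D × D` real matrix with spectral
radius `ρ(ν) < 1`, and let `Λ = diagonal l` and `E = diagonal e` be diagonal
matrices with positive diagonal entries satisfying `l i / e i ≤ 1` for every
`i`. If `(I − ν)⁻¹ Λ [(I − ν)⁻¹]ᵀ = E`, then `ν` is diagonal, and in fact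
`ν = I − Λ^{1/2} E^{-1/2}`. -/
theorem stmt_3 (D : ℕ) (ν : Matrix (Fin D) (Fin D) ℝ)
    (hnn : ∀ i j, 0 ≤ ν i j)
    (hspec : ∀ μ ∈ spectrum ℂ (ν.map (Complex.ofReal)), ‖μ‖ < 1)
    (l e : Fin D → ℝ) (hl : ∀ i, 0 < l i) (he : ∀ i, 0 < e i)
    (hle : ∀ i, l i / e i ≤ 1)
    (heq : (1 - ν)⁻¹ * Matrix.diagonal l * ((1 - ν)⁻¹)ᵀ = Matrix.diagonal e) :
    (∀ i j, i ≠ j → ν i j = 0) ∧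
      ν = 1 - Matrix.diagonal (fun i => Real.sqrt (l i) / Real.sqrt (e i)) :=
  stmt_3_general D ν hnn hspec l e hl heq
end

section
/- Moments of convolutions grow at most linearly: let ν = {ν_{ij}} be a D×D matrix with nonnegative entries, G = {g_{ij}} a D×D matrix of probability density functions on ℝ with max_{i,j} ∫_ℝ |x|^α g_{ij}(x) dx < ∞ for some 0 < α ≤ 1, and set K = ν ⊙ G (entrywise product). Define matrix convolution powers K^{*1} = K and K^{*(m+1)}(x) = ∫_ℝ K^{*m}(x − y) K(y) dy. Then for every m ∈ ℕ and all i, j: ∫_ℝ |x|^α [K^{*m}(x)]_{ij} dx ≤ m · [ν^m]_{ij} · max_{a,b} ∫_ℝ |x|^α g_{ab}(x) dx. -/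
open MeasureTheory

/-- Matrix convolution powers: `matConvPow K 0 = K` (i.e. `K^{*1}`), and
`matConvPow K (m+1) x = ∫ K^{*(m+1)}(x − y) K(y) dy` (i.e. `K^{*(m+2)}`),
defined entrywise via the Bochner integral. -/
noncomputable def matConvPow {D : ℕ} (K : ℝ → Matrix (Fin D) (Fin D) ℝ) :
    ℕ → ℝ → Matrix (Fin D) (Fin D) ℝ
  | 0, x => K x
  | m + 1, x => Matrix.of fun i j => ∫ y : ℝ, (matConvPow K m (x - y) * K y) i j

/-- Moments of convolutions grow at most linearly: with `ν` entrywise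
nonnegative, `G = {g i j}` a matrix of probability densities on `ℝ` with
`∫ |x|^α g_{ab}(x) dx ≤ C` for all `a, b` and some `0 < α ≤ 1`, and
`K = ν ⊙ G`, for every `m` and all `i, j`,
`∫ |x|^α [K^{*(m+1)}(x)]_{ij} dx ≤ (m+1) · [ν^{m+1}]_{ij} · C`. -/
theorem stmt_5 (D : ℕ) (α : ℝ) (hα0 : 0 < α) (hα1 : α ≤ 1)
    (ν : Matrix (Fin D) (Fin D) ℝ) (hν : ∀ i j, 0 ≤ ν i j)
    (g : Fin D → Fin D → ℝ → ℝ)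
    (hgmeas : ∀ i j, Measurable (g i j))
    (hgnn : ∀ i j x, 0 ≤ g i j x)
    (hgint : ∀ i j, Integrable (g i j))
    (hgone : ∀ i j, ∫ x : ℝ, g i j x = 1)
    (C : ℝ)
    (hmomint : ∀ a b, Integrable (fun x => |x| ^ α * g a b x))
    (hmom : ∀ a b, ∫ x : ℝ, |x| ^ α * g a b x ≤ C)
    (K : ℝ → Matrix (Fin D) (Fin D) ℝ)
    (hK : ∀ x, K x = Matrix.of fun i j => ν i j * g i j x) :
    ∀ (m : ℕ) (i j : Fin D),
      ∫ x : ℝ, |x| ^ α * matConvPow K m x i j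
        ≤ (m + 1 : ℝ) * (ν ^ (m + 1)) i j * C := by
  -- basic facts about K
  have hKentry : ∀ (y : ℝ) (a b : Fin D), K y a b = ν a b * g a b y := by
    intro y a b; rw [hK]; rfl
  have hKnn : ∀ (y : ℝ) (a b : Fin D), 0 ≤ K y a b := fun y a b => by
    rw [hKentry]; exact mul_nonneg (hν a b) (hgnn a b y)
  have hKmeas : ∀ (a b : Fin D), Measurable fun y => K y a b := by
    intro a b
    have : (fun y => K y a b) = fun y => ν a b * g a b y := by
      funext y; exact hKentry y a b
    rw [this]; exact (hgmeas a b).const_mul _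
  have hKfun : ∀ (a b : Fin D), (fun y => K y a b) = fun y => ν a b * g a b y := by
    intro a b; funext y; exact hKentry y a b
  -- entries of powers of ν are nonnegative
  have hνpow : ∀ (n : ℕ) (a b : Fin D), 0 ≤ (ν ^ (n + 1)) a b := by
    intro n
    induction n with
    | zero => simpa [pow_one] using hν
    | succ n ih =>
      intro a b
      rw [pow_succ, Matrix.mul_apply]
      exact Finset.sum_nonneg fun k _ => mul_nonneg (ih a k) (hν k b)
  -- subadditivity of rpow
  have hsub : ∀ a b : ℝ, 0 ≤ a → 0 ≤ b → (a + b) ^ α ≤ a ^ α + b ^ α := by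
    intro a b ha hb
    have h := NNReal.rpow_add_le_add_rpow (a.toNNReal) (b.toNNReal) hα0.le hα1
    rw [← Real.toNNReal_add ha hb] at h
    have h2 := NNReal.coe_le_coe.2 h
    simpa [NNReal.coe_rpow, Real.coe_toNNReal _ (add_nonneg ha hb),
      Real.coe_toNNReal _ ha, Real.coe_toNNReal _ hb] using h2
  have habs : ∀ x y : ℝ, |x| ^ α ≤ |x - y| ^ α + |y| ^ α := by
    intro x y
    calc |x| ^ α ≤ (|x - y| + |y|) ^ α := by
          apply Real.rpow_le_rpow (abs_nonneg _) _ hα0.le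
          simpa using abs_add_le (x - y) y
      _ ≤ |x - y| ^ α + |y| ^ α := hsub _ _ (abs_nonneg _) (abs_nonneg _)
  -- basic lintegral computations for K
  have hK_lint : ∀ (k b : Fin D), ∫⁻ y, ENNReal.ofReal (K y k b) = ENNReal.ofReal (ν k b) := by
    intro k b
    rw [← ofReal_integral_eq_lintegral_ofReal]
    · rw [hKfun k b, integral_const_mul, hgone, mul_one]
    · rw [hKfun k b]; exact (hgint k b).const_mul _
    · exact Filter.Eventually.of_forall fun y => hKnn y k b
  have hKmom : ∀ (k b : Fin D),
      ∫⁻ y, ENNReal.ofReal (|y| ^ α * K y k b) ≤ ENNReal.ofReal (ν k b * C) := by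
    intro k b
    have hfun : (fun y => |y| ^ α * K y k b) = fun y => ν k b * (|y| ^ α * g k b y) := by
      funext y; rw [hKentry]; ring
    rw [← ofReal_integral_eq_lintegral_ofReal]
    · apply ENNReal.ofReal_le_ofReal
      rw [hfun, integral_const_mul]
      exact mul_le_mul_of_nonneg_left (hmom k b) (hν k b)
    · rw [hfun]; exact (hmomint k b).const_mul _
    · exact Filter.Eventually.of_forall fun y =>
        mul_nonneg (Real.rpow_nonneg (abs_nonneg _) _) (hKnn y k b)
  -- translation-invariance convolution swap for lintegrals
  have hswap : ∀ (φ ψ : ℝ → ENNReal), Measurable φ → Measurable ψ →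
      (∫⁻ x : ℝ, ∫⁻ y : ℝ, φ (x - y) * ψ y) = (∫⁻ t : ℝ, φ t) * ∫⁻ y : ℝ, ψ y := by
    intro φ ψ hφ hψ
    rw [lintegral_lintegral_swap
      (((hφ.comp (measurable_fst.sub measurable_snd)).mul (hψ.comp measurable_snd)).aemeasurable)]
    calc ∫⁻ y : ℝ, ∫⁻ x : ℝ, φ (x - y) * ψ y
        = ∫⁻ y : ℝ, (∫⁻ x : ℝ, φ (x - y)) * ψ y := by
          refine lintegral_congr fun y => ?_
          exact lintegral_mul_const _ (hφ.comp (measurable_id.sub measurable_const))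
      _ = ∫⁻ y : ℝ, (∫⁻ t : ℝ, φ t) * ψ y := by
          refine lintegral_congr fun y => ?_
          rw [lintegral_sub_right_eq_self φ y]
      _ = (∫⁻ t : ℝ, φ t) * ∫⁻ y : ℝ, ψ y := lintegral_const_mul _ hψ
  -- the main induction
  have main : ∀ n : ℕ,
      (∀ a b : Fin D, Measurable fun x => matConvPow K n x a b) ∧
      (∀ (x : ℝ) (a b : Fin D), 0 ≤ matConvPow K n x a b) ∧
      (∀ a b : Fin D, ∫⁻ x, ENNReal.ofReal (matConvPow K n x a b)
          = ENNReal.ofReal ((ν ^ (n + 1)) a b)) ∧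
      (∀ a b : Fin D, ∫⁻ x, ENNReal.ofReal (|x| ^ α * matConvPow K n x a b)
          ≤ ENNReal.ofReal (((n : ℝ) + 1) * (ν ^ (n + 1)) a b * C)) := by
    intro n
    induction n with
    | zero =>
      refine ⟨?_, ?_, ?_, ?_⟩
      · intro a b; simpa [matConvPow] using hKmeas a b
      · intro x a b; simpa [matConvPow] using hKnn x a b
      · intro a b
        simpa [matConvPow, pow_one] using hK_lint a b
      · intro a b
        have := hKmom a b
        simpa [matConvPow, pow_one, mul_comm] using this
    | succ n ih =>
      obtain ⟨ihmeas, ihnn, ihint, ihmom⟩ := ih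
      set F := matConvPow K n with hF
      -- entry formula
      have hentry : ∀ (x : ℝ) (a b : Fin D),
          matConvPow K (n + 1) x a b = ∫ y : ℝ, (F (x - y) * K y) a b := by
        intro x a b; simp [matConvPow, hF]
      -- nonnegativity of the product entries
      have hprodnn : ∀ (x y : ℝ) (a b : Fin D), 0 ≤ (F (x - y) * K y) a b := by
        intro x y a b
        rw [Matrix.mul_apply]
        exact Finset.sum_nonneg fun k _ => mul_nonneg (ihnn _ a k) (hKnn y k b)
      -- measurability of the product entries on the product space
      have hprodmeas : ∀ a b : Fin D,
          Measurable fun p : ℝ × ℝ => (F (p.1 - p.2) * K p.2) a b := by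
        intro a b
        simp only [Matrix.mul_apply]
        refine Finset.measurable_sum _ fun k _ => ?_
        exact ((ihmeas a k).comp (measurable_fst.sub measurable_snd)).mul
          ((hKmeas k b).comp measurable_snd)
      -- decomposition of ofReal of the product entry
      have hofReal : ∀ (x y : ℝ) (a b : Fin D),
          ENNReal.ofReal ((F (x - y) * K y) a b)
            = ∑ k, ENNReal.ofReal (F (x - y) a k) * ENNReal.ofReal (K y k b) := by
        intro x y a b
        rw [Matrix.mul_apply, ENNReal.ofReal_sum_of_nonneg
          (fun k _ => mul_nonneg (ihnn _ a k) (hKnn y k b))]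
        exact Finset.sum_congr rfl fun k _ => ENNReal.ofReal_mul (ihnn _ a k)
      -- the double lintegral of the product entry
      have hprod_lint : ∀ a b : Fin D,
          (∫⁻ x : ℝ, ∫⁻ y : ℝ, ENNReal.ofReal ((F (x - y) * K y) a b))
            = ENNReal.ofReal ((ν ^ (n + 2)) a b) := by
        intro a b
        have h2 : ∀ x : ℝ, (∫⁻ y : ℝ, ENNReal.ofReal ((F (x - y) * K y) a b))
            = ∑ k, ∫⁻ y : ℝ, ENNReal.ofReal (F (x - y) a k) * ENNReal.ofReal (K y k b) := by
          intro x
          simp_rw [hofReal x _ a b]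
          exact lintegral_finset_sum _ fun k _ =>
            (((ihmeas a k).comp (measurable_const.sub measurable_id)).ennreal_ofReal.mul
              ((hKmeas k b).ennreal_ofReal))
        calc (∫⁻ x : ℝ, ∫⁻ y : ℝ, ENNReal.ofReal ((F (x - y) * K y) a b))
            = ∑ k, ∫⁻ x : ℝ, ∫⁻ y : ℝ,
                ENNReal.ofReal (F (x - y) a k) * ENNReal.ofReal (K y k b) := by
              simp_rw [h2]
              exact lintegral_finset_sum _ fun k _ =>
                (((ihmeas a k).comp (measurable_fst.sub measurable_snd)).ennreal_ofReal.mul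
                  ((hKmeas k b).ennreal_ofReal.comp measurable_snd)).lintegral_prod_right'
          _ = ∑ k, ENNReal.ofReal ((ν ^ (n + 1)) a k) * ENNReal.ofReal (ν k b) := by
              refine Finset.sum_congr rfl fun k _ => ?_
              rw [hswap _ _ (ihmeas a k).ennreal_ofReal (hKmeas k b).ennreal_ofReal,
                ihint a k, hK_lint k b]
          _ = ENNReal.ofReal ((ν ^ (n + 2)) a b) := by
              rw [show ν ^ (n + 2) = ν ^ (n + 1) * ν from pow_succ ν (n + 1),
                Matrix.mul_apply, ENNReal.ofReal_sum_of_nonneg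
                  (fun k _ => mul_nonneg (hνpow n a k) (hν k b))]
              exact Finset.sum_congr rfl fun k _ => (ENNReal.ofReal_mul (hνpow n a k)).symm
      -- a.e. slice integrability
      have hslice : ∀ a b : Fin D,
          ∀ᵐ x : ℝ, Integrable fun y => (F (x - y) * K y) a b := by
        intro a b
        have hm : Measurable fun x : ℝ => ∫⁻ y : ℝ, ENNReal.ofReal ((F (x - y) * K y) a b) :=
          (hprodmeas a b).ennreal_ofReal.lintegral_prod_right'
        have hfin : ∀ᵐ x : ℝ, (∫⁻ y : ℝ, ENNReal.ofReal ((F (x - y) * K y) a b)) < ⊤ := by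
          refine ae_lt_top hm ?_
          rw [hprod_lint a b]; exact ENNReal.ofReal_ne_top
        filter_upwards [hfin] with x hx
        refine ⟨((hprodmeas a b).comp
          (measurable_const.prodMk measurable_id)).aestronglyMeasurable, ?_⟩
        rw [hasFiniteIntegral_iff_ofReal
          (Filter.Eventually.of_forall fun y => hprodnn x y a b)]
        exact hx
      -- measurability of the new entries
      have hmeas' : ∀ a b : Fin D, Measurable fun x => matConvPow K (n + 1) x a b := by
        intro a b
        have h := (hprodmeas a b).stronglyMeasurable.integral_prod_right'
          (ν := (volume : Measure ℝ))
        have : (fun x => matConvPow K (n + 1) x a b)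
            = fun x => ∫ y : ℝ, (F (x - y) * K y) a b := by
          funext x; exact hentry x a b
        rw [this]
        exact h.measurable
      -- nonnegativity of the new entries
      have hnn' : ∀ (x : ℝ) (a b : Fin D), 0 ≤ matConvPow K (n + 1) x a b := by
        intro x a b
        rw [hentry]
        exact integral_nonneg fun y => hprodnn x y a b
      -- lintegral identity for the new entries
      have hlint' : ∀ a b : Fin D, ∫⁻ x, ENNReal.ofReal (matConvPow K (n + 1) x a b)
          = ENNReal.ofReal ((ν ^ (n + 2)) a b) := by
        intro a b
        rw [← hprod_lint a b]
        refine lintegral_congr_ae ?_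
        filter_upwards [hslice a b] with x hx
        rw [hentry, ofReal_integral_eq_lintegral_ofReal hx
          (Filter.Eventually.of_forall fun y => hprodnn x y a b)]
      refine ⟨hmeas', hnn', fun a b => hlint' a b, ?_⟩
      -- the moment bound
      intro a b
      -- rewrite the moment lintegral as a double lintegral
      have step1 : ∫⁻ x, ENNReal.ofReal (|x| ^ α * matConvPow K (n + 1) x a b)
          = ∫⁻ x : ℝ, ∫⁻ y : ℝ, ENNReal.ofReal (|x| ^ α * (F (x - y) * K y) a b) := by
        refine lintegral_congr_ae ?_
        filter_upwards [hslice a b] with x hx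
        have hm : Measurable fun y : ℝ => ENNReal.ofReal ((F (x - y) * K y) a b) :=
          ((hprodmeas a b).comp (measurable_const.prodMk measurable_id)).ennreal_ofReal
        rw [hentry, ENNReal.ofReal_mul (Real.rpow_nonneg (abs_nonneg _) _),
          ofReal_integral_eq_lintegral_ofReal hx
            (Filter.Eventually.of_forall fun y => hprodnn x y a b),
          ← lintegral_const_mul _ hm]
        refine lintegral_congr fun y => ?_
        rw [← ENNReal.ofReal_mul (Real.rpow_nonneg (abs_nonneg _) _)]
      -- pointwise splitting
      have step2 : ∀ x y : ℝ, ENNReal.ofReal (|x| ^ α * (F (x - y) * K y) a b)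
          ≤ ENNReal.ofReal (|x - y| ^ α * (F (x - y) * K y) a b)
            + ENNReal.ofReal (|y| ^ α * (F (x - y) * K y) a b) := by
        intro x y
        rw [← ENNReal.ofReal_add (mul_nonneg (Real.rpow_nonneg (abs_nonneg _) _) (hprodnn x y a b))
          (mul_nonneg (Real.rpow_nonneg (abs_nonneg _) _) (hprodnn x y a b))]
        apply ENNReal.ofReal_le_ofReal
        rw [← add_mul]
        exact mul_le_mul_of_nonneg_right (habs x y) (hprodnn x y a b)
      -- the two double lintegrals
      have measA : ∀ k : Fin D, Measurable fun t : ℝ => ENNReal.ofReal (|t| ^ α * F t a k) :=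
        fun k => (((measurable_abs.pow_const α)).mul (ihmeas a k)).ennreal_ofReal
      have measK2 : ∀ k : Fin D, Measurable fun y : ℝ => ENNReal.ofReal (|y| ^ α * K y k b) :=
        fun k => (((measurable_abs.pow_const α)).mul (hKmeas k b)).ennreal_ofReal
      have boundA : (∫⁻ x : ℝ, ∫⁻ y : ℝ, ENNReal.ofReal (|x - y| ^ α * (F (x - y) * K y) a b))
          ≤ ∑ k, ENNReal.ofReal (((n : ℝ) + 1) * (ν ^ (n + 1)) a k * C) * ENNReal.ofReal (ν k b) := by
        have hrw : ∀ x y : ℝ, ENNReal.ofReal (|x - y| ^ α * (F (x - y) * K y) a b)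
            = ∑ k, ENNReal.ofReal (|x - y| ^ α * F (x - y) a k) * ENNReal.ofReal (K y k b) := by
          intro x y
          rw [ENNReal.ofReal_mul (Real.rpow_nonneg (abs_nonneg _) _), hofReal x y a b,
            Finset.mul_sum]
          refine Finset.sum_congr rfl fun k _ => ?_
          rw [← mul_assoc, ← ENNReal.ofReal_mul (Real.rpow_nonneg (abs_nonneg _) _)]
        calc (∫⁻ x : ℝ, ∫⁻ y : ℝ, ENNReal.ofReal (|x - y| ^ α * (F (x - y) * K y) a b))
            = ∑ k, ∫⁻ x : ℝ, ∫⁻ y : ℝ,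
                ENNReal.ofReal (|x - y| ^ α * F (x - y) a k) * ENNReal.ofReal (K y k b) := by
              have h2 : ∀ x : ℝ, (∫⁻ y : ℝ, ENNReal.ofReal (|x - y| ^ α * (F (x - y) * K y) a b))
                  = ∑ k, ∫⁻ y : ℝ,
                      ENNReal.ofReal (|x - y| ^ α * F (x - y) a k) * ENNReal.ofReal (K y k b) := by
                intro x
                simp_rw [hrw x]
                exact lintegral_finset_sum _ fun k _ =>
                  (((measA k).comp (measurable_const.sub measurable_id)).mul
                    ((hKmeas k b).ennreal_ofReal))
              simp_rw [h2]
              exact lintegral_finset_sum _ fun k _ =>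
                (((measA k).comp (measurable_fst.sub measurable_snd)).mul
                  ((hKmeas k b).ennreal_ofReal.comp measurable_snd)).lintegral_prod_right'
          _ ≤ ∑ k, ENNReal.ofReal (((n : ℝ) + 1) * (ν ^ (n + 1)) a k * C)
                * ENNReal.ofReal (ν k b) := by
              refine Finset.sum_le_sum fun k _ => ?_
              rw [hswap _ _ (measA k) (hKmeas k b).ennreal_ofReal, hK_lint k b]
              exact mul_le_mul_left (ihmom a k) _
      have boundB : (∫⁻ x : ℝ, ∫⁻ y : ℝ, ENNReal.ofReal (|y| ^ α * (F (x - y) * K y) a b))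
          ≤ ∑ k, ENNReal.ofReal ((ν ^ (n + 1)) a k) * ENNReal.ofReal (ν k b * C) := by
        have hrw : ∀ x y : ℝ, ENNReal.ofReal (|y| ^ α * (F (x - y) * K y) a b)
            = ∑ k, ENNReal.ofReal (F (x - y) a k) * ENNReal.ofReal (|y| ^ α * K y k b) := by
          intro x y
          have hr : |y| ^ α * (F (x - y) * K y) a b
              = ∑ k, F (x - y) a k * (|y| ^ α * K y k b) := by
            rw [Matrix.mul_apply, Finset.mul_sum]
            exact Finset.sum_congr rfl fun k _ => by ring
          rw [hr, ENNReal.ofReal_sum_of_nonneg (fun k _ => mul_nonneg (ihnn _ a k)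
            (mul_nonneg (Real.rpow_nonneg (abs_nonneg _) _) (hKnn y k b)))]
          exact Finset.sum_congr rfl fun k _ => ENNReal.ofReal_mul (ihnn _ a k)
        calc (∫⁻ x : ℝ, ∫⁻ y : ℝ, ENNReal.ofReal (|y| ^ α * (F (x - y) * K y) a b))
            = ∑ k, ∫⁻ x : ℝ, ∫⁻ y : ℝ,
                ENNReal.ofReal (F (x - y) a k) * ENNReal.ofReal (|y| ^ α * K y k b) := by
              have h2 : ∀ x : ℝ, (∫⁻ y : ℝ, ENNReal.ofReal (|y| ^ α * (F (x - y) * K y) a b))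
                  = ∑ k, ∫⁻ y : ℝ,
                      ENNReal.ofReal (F (x - y) a k) * ENNReal.ofReal (|y| ^ α * K y k b) := by
                intro x
                simp_rw [hrw x]
                exact lintegral_finset_sum _ fun k _ =>
                  (((ihmeas a k).comp (measurable_const.sub measurable_id)).ennreal_ofReal.mul
                    (measK2 k))
              simp_rw [h2]
              exact lintegral_finset_sum _ fun k _ =>
                (((ihmeas a k).comp (measurable_fst.sub measurable_snd)).ennreal_ofReal.mul
                  ((measK2 k).comp measurable_snd)).lintegral_prod_right'
          _ ≤ ∑ k, ENNReal.ofReal ((ν ^ (n + 1)) a k) * ENNReal.ofReal (ν k b * C) := by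
              refine Finset.sum_le_sum fun k _ => ?_
              rw [hswap _ _ (ihmeas a k).ennreal_ofReal (measK2 k), ihint a k]
              exact mul_le_mul_right (hKmom k b) _
      -- combine
      calc ∫⁻ x, ENNReal.ofReal (|x| ^ α * matConvPow K (n + 1) x a b)
          = ∫⁻ x : ℝ, ∫⁻ y : ℝ, ENNReal.ofReal (|x| ^ α * (F (x - y) * K y) a b) := step1
        _ ≤ ∫⁻ x : ℝ, ∫⁻ y : ℝ, (ENNReal.ofReal (|x - y| ^ α * (F (x - y) * K y) a b)
              + ENNReal.ofReal (|y| ^ α * (F (x - y) * K y) a b)) := by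
            refine lintegral_mono fun x => lintegral_mono fun y => step2 x y
        _ = (∫⁻ x : ℝ, ∫⁻ y : ℝ, ENNReal.ofReal (|x - y| ^ α * (F (x - y) * K y) a b))
              + ∫⁻ x : ℝ, ∫⁻ y : ℝ, ENNReal.ofReal (|y| ^ α * (F (x - y) * K y) a b) := by
            have m1 : Measurable fun p : ℝ × ℝ =>
                ENNReal.ofReal (|p.1 - p.2| ^ α * (F (p.1 - p.2) * K p.2) a b) :=
              (((((measurable_fst.sub measurable_snd).abs).pow_const α)).mul
                (hprodmeas a b)).ennreal_ofReal
            have m2 : Measurable fun p : ℝ × ℝ =>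
                ENNReal.ofReal (|p.2| ^ α * (F (p.1 - p.2) * K p.2) a b) :=
              ((((measurable_snd.abs).pow_const α)).mul (hprodmeas a b)).ennreal_ofReal
            have hinner : ∀ x : ℝ,
                (∫⁻ y : ℝ, (ENNReal.ofReal (|x - y| ^ α * (F (x - y) * K y) a b)
                  + ENNReal.ofReal (|y| ^ α * (F (x - y) * K y) a b)))
                = (∫⁻ y : ℝ, ENNReal.ofReal (|x - y| ^ α * (F (x - y) * K y) a b))
                  + ∫⁻ y : ℝ, ENNReal.ofReal (|y| ^ α * (F (x - y) * K y) a b) := by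
              intro x
              exact lintegral_add_left (m1.comp (measurable_const.prodMk measurable_id)) _
            simp_rw [hinner]
            exact lintegral_add_left m1.lintegral_prod_right' _
        _ ≤ (∑ k, ENNReal.ofReal (((n : ℝ) + 1) * (ν ^ (n + 1)) a k * C) * ENNReal.ofReal (ν k b))
              + ∑ k, ENNReal.ofReal ((ν ^ (n + 1)) a k) * ENNReal.ofReal (ν k b * C) :=
            add_le_add boundA boundB
        _ ≤ ENNReal.ofReal (((n + 1 : ℕ) + 1 : ℝ) * (ν ^ (n + 1 + 1)) a b * C) := by
            -- collapse to a single ofReal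
            have e1 : ∀ k : Fin D,
                ENNReal.ofReal (((n : ℝ) + 1) * (ν ^ (n + 1)) a k * C) * ENNReal.ofReal (ν k b)
                ≤ ENNReal.ofReal ((((n : ℝ) + 1) * (ν ^ (n + 1)) a k * C) * ν k b) := by
              intro k
              rw [← ENNReal.ofReal_mul']
              exact hν k b
            have e2 : ∀ k : Fin D,
                ENNReal.ofReal ((ν ^ (n + 1)) a k) * ENNReal.ofReal (ν k b * C)
                = ENNReal.ofReal ((ν ^ (n + 1)) a k * (ν k b * C)) :=
              fun k => (ENNReal.ofReal_mul (hνpow n a k)).symm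
            calc (∑ k, ENNReal.ofReal (((n : ℝ) + 1) * (ν ^ (n + 1)) a k * C)
                    * ENNReal.ofReal (ν k b))
                  + ∑ k, ENNReal.ofReal ((ν ^ (n + 1)) a k) * ENNReal.ofReal (ν k b * C)
                ≤ (∑ k, ENNReal.ofReal ((((n : ℝ) + 1) * (ν ^ (n + 1)) a k * C) * ν k b))
                  + ∑ k, ENNReal.ofReal ((ν ^ (n + 1)) a k * (ν k b * C)) := by
                  refine add_le_add (Finset.sum_le_sum fun k _ => e1 k) ?_
                  exact le_of_eq (Finset.sum_congr rfl fun k _ => e2 k)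
              _ ≤ ENNReal.ofReal (∑ k, (((n : ℝ) + 1) * (ν ^ (n + 1)) a k * C) * ν k b)
                  + ENNReal.ofReal (∑ k, (ν ^ (n + 1)) a k * (ν k b * C)) := by
                  have hC : 0 ≤ C :=
                    le_trans (integral_nonneg fun x =>
                      mul_nonneg (Real.rpow_nonneg (abs_nonneg x) α) (hgnn a b x)) (hmom a b)
                  refine add_le_add
                    (le_of_eq (ENNReal.ofReal_sum_of_nonneg fun k _ =>
                      mul_nonneg (mul_nonneg (mul_nonneg (by positivity) (hνpow n a k)) hC)
                        (hν k b)).symm)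
                    (le_of_eq (ENNReal.ofReal_sum_of_nonneg fun k _ =>
                      mul_nonneg (hνpow n a k) (mul_nonneg (hν k b) hC)).symm)
              _ ≤ ENNReal.ofReal ((∑ k, (((n : ℝ) + 1) * (ν ^ (n + 1)) a k * C) * ν k b)
                  + ∑ k, (ν ^ (n + 1)) a k * (ν k b * C)) := by
                  have hC : 0 ≤ C :=
                    le_trans (integral_nonneg fun x =>
                      mul_nonneg (Real.rpow_nonneg (abs_nonneg x) α) (hgnn a b x)) (hmom a b)
                  refine le_of_eq (ENNReal.ofReal_add
                    (Finset.sum_nonneg fun k _ =>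
                      mul_nonneg (mul_nonneg (mul_nonneg (by positivity) (hνpow n a k)) hC)
                        (hν k b))
                    (Finset.sum_nonneg fun k _ =>
                      mul_nonneg (hνpow n a k) (mul_nonneg (hν k b) hC))).symm
              _ = ENNReal.ofReal (((n + 1 : ℕ) + 1 : ℝ) * (ν ^ (n + 1 + 1)) a b * C) := by
                  congr 1
                  rw [show ν ^ (n + 1 + 1) = ν ^ (n + 1) * ν from pow_succ ν (n + 1),
                    Matrix.mul_apply, Finset.mul_sum, Finset.sum_mul, ← Finset.sum_add_distrib]
                  push_cast
                  refine Finset.sum_congr rfl fun k _ => ?_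
                  ring
  -- conclude
  intro m i j
  have hC : 0 ≤ C :=
    le_trans (integral_nonneg fun x =>
      mul_nonneg (Real.rpow_nonneg (abs_nonneg x) α) (hgnn i j x)) (hmom i j)
  obtain ⟨hmeas, hnn, hint, hmomb⟩ := main m
  have hRHSnn : 0 ≤ ((m : ℝ) + 1) * (ν ^ (m + 1)) i j * C :=
    mul_nonneg (mul_nonneg (by positivity) (hνpow m i j)) hC
  rw [integral_eq_lintegral_of_nonneg_ae
    (Filter.Eventually.of_forall fun x =>
      mul_nonneg (Real.rpow_nonneg (abs_nonneg x) α) (hnn x i j))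
    ((((measurable_abs.pow_const α)).mul (hmeas i j)).aestronglyMeasurable)]
  calc (∫⁻ x, ENNReal.ofReal (|x| ^ α * matConvPow K m x i j)).toReal
      ≤ (ENNReal.ofReal (((m : ℝ) + 1) * (ν ^ (m + 1)) i j * C)).toReal :=
        ENNReal.toReal_mono ENNReal.ofReal_ne_top (hmomb i j)
    _ = ((m : ℝ) + 1) * (ν ^ (m + 1)) i j * C := ENNReal.toReal_ofReal hRHSnn
end
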